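/- The wheel W₅ (5-cycle plus a hub adjacent to all five cycle vertices) admits no semi-transitive orientation; hence W₅ is not word-representable. -/

import Mathlib

/-- `o` is an orientation of the simple graph `G`: each edge gets exactly one direction. -/
def IsOrientation {V : Type*} (G : SimpleGraph V) (o : V → V → Prop) : Prop :=
  (∀ u v, o u v → G.Adj u v) ∧ (∀ u v, G.Adj u v → (o u v ∨ o v u)) ∧
    (∀ u v, o u v → ¬ o v u)

/-- An orientation (relation) is acyclic if there is no directed cycle. -/
def IsAcyclic {V : Type*} (o : V → V → Prop) : Prop :=
  Irreflexive (Relation.TransGen o)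

/-- Semi-transitive: acyclic, and every directed path `u₁ → ⋯ → u_{t+1}` together with a
shortcut edge `u₁ → u_{t+1}` forces all edges `u_i → u_j` for `i < j`. -/
def SemiTransitive {V : Type*} (o : V → V → Prop) : Prop :=
  IsAcyclic o ∧ ∀ (t : ℕ) (f : Fin (t + 1) → V),
    (∀ i : Fin t, o (f i.castSucc) (f i.succ)) →
    o (f 0) (f (Fin.last t)) →
    ∀ i j : Fin (t + 1), i < j → o (f i) (f j)

/-- The wheel graph `W_n`: cycle `C_n` plus a hub (`none`) adjacent to all rim vertices. -/
def wheelGraph (n : ℕ) : SimpleGraph (Option (Fin n)) where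
  Adj x y :=
    match x, y with
    | none, none => False
    | none, some _ => True
    | some _, none => True
    | some i, some j => (SimpleGraph.cycleGraph n).Adj i j
  symm := by
    refine ⟨?_⟩
    intro x y h
    match x, y with
    | none, some _ => trivial
    | some _, none => trivial
    | some i, some j => exact ((SimpleGraph.cycleGraph n).adj_symm h)
  loopless := by
    refine ⟨?_⟩
    intro x
    match x with
    | none => exact fun h => h
    | some i => exact fun h => (SimpleGraph.cycleGraph n).irrefl h

/-- Two letters alternate in a word: the restriction of the word to their occurrences has
no two equal consecutive letters. -/
def Alternate {V : Type*} [DecidableEq V] (w : List V) (x y : V) : Prop :=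
  (w.filter fun z => decide (z = x ∨ z = y)).Chain' (· ≠ ·)

/-- A word `w` represents a graph `G`: every vertex occurs in `w`, and two distinct
vertices alternate in `w` iff they are adjacent in `G`. -/
def Represents {V : Type*} [DecidableEq V] (w : List V) (G : SimpleGraph V) : Prop :=
  (∀ v : V, v ∈ w) ∧ ∀ x y : V, x ≠ y → (Alternate w x y ↔ G.Adj x y)

/-- A comparability graph: admits a transitive orientation. -/
def IsComparabilityGraph {V : Type*} (G : SimpleGraph V) : Prop :=
  ∃ o : V → V → Prop, IsOrientation G o ∧ Transitive o

/-- Abstract combinatorial structure of a near-triangulation: a graph together with a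
set of inner vertices such that the neighborhood of every inner vertex induces a cycle
of length equal to its degree. (Planarity is not available in Mathlib, so a
near-triangulation is abstracted by this key structural property.) -/
def IsNearTriangulation {V : Type*} [Fintype V] (G : SimpleGraph V) [DecidableRel G.Adj]
    (inner : Set V) : Prop :=
  ∀ v ∈ inner, 3 ≤ G.degree v ∧
    Nonempty ((G.induce (G.neighborSet v)) ≃g SimpleGraph.cycleGraph (G.degree v))

/-- `G` contains an induced copy of `H`. -/
def HasInducedCopy {V W : Type*} (G : SimpleGraph V) (H : SimpleGraph W) : Prop :=
  ∃ s : Set V, Nonempty ((G.induce s) ≃g H)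

/-!
In a semi-transitive orientation the neighbourhood of any vertex `v` induces a comparability
graph (Halldórsson–Kitaev–Pyatkin): keep the orientation among the in-neighbours of `v` and among
its out-neighbours, and reverse the edges between the two classes (which all point from in- to
out-neighbours, since there is no directed triangle); the shortcut condition on four-vertex paths
through `v` makes the result transitive. The neighbourhood of the hub of `W₅` is `C₅`, which is
not a comparability graph: it is triangle-free, so in a transitive orientation no vertex has both
an in- and an out-neighbour, and this would properly 2-colour an odd cycle.

Conversely, a word representing a graph orients `x → y` when `x` comes first among the
alternating letters `x, y`. Along a directed path the prefix counts of the letters can only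
decrease, and an edge from the start to the end of the path bounds the total drop by one, so any
two letters on the path alternate; the same counts rule out directed cycles.
-/

open SimpleGraph

section Orientation
variable {V : Type*} {G : SimpleGraph V} {o : V → V → Prop}

lemma IsOrientation.adj (hor : IsOrientation G o) {u v : V} (h : o u v) : G.Adj u v :=
  hor.1 u v h

lemma IsOrientation.total (hor : IsOrientation G o) {u v : V} (h : G.Adj u v) : o u v ∨ o v u :=
  hor.2.1 u v h

lemma IsOrientation.asymm (hor : IsOrientation G o) {u v : V} (h : o u v) : ¬ o v u :=
  hor.2.2 u v h

lemma SemiTransitive.not_cycle_three (hst : SemiTransitive o) {a b c : V}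
    (hab : o a b) (hbc : o b c) (hca : o c a) : False :=
  hst.1 a (((Relation.TransGen.single hab).tail hbc).tail hca)

lemma SemiTransitive.shortcut_three (hst : SemiTransitive o) {a b c d : V}
    (hab : o a b) (hbc : o b c) (hcd : o c d) (had : o a d) : o a c ∧ o b d := by
  have hpath : ∀ i : Fin 3, o (![a, b, c, d] i.castSucc) (![a, b, c, d] i.succ) := by
    intro i; fin_cases i <;> assumption
  have h := hst.2 3 ![a, b, c, d] hpath had
  exact ⟨h 0 2 (by decide), h 1 3 (by decide)⟩

end Orientation

lemma IsComparabilityGraph.of_iso {V W : Type*} {G : SimpleGraph V} {H : SimpleGraph W}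
    (hG : IsComparabilityGraph G) (e : G ≃g H) : IsComparabilityGraph H := by
  obtain ⟨o, hor, htrans⟩ := hG
  refine ⟨fun x y => o (e.symm x) (e.symm y), ⟨fun u v h => ?_, fun u v h => ?_, fun u v h => ?_⟩,
    fun x y z hxy hyz => htrans hxy hyz⟩
  · exact e.symm.map_adj_iff.mp (hor.adj h)
  · exact hor.total (e.symm.map_adj_iff.mpr h)
  · exact hor.asymm h

lemma IsComparabilityGraph.colorable_two {V : Type*} {G : SimpleGraph V}
    (hG : IsComparabilityGraph G) (h3 : G.CliqueFree 3) : G.Colorable 2 := by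
  classical
  obtain ⟨o, hor, htrans⟩ := hG
  have hsink : ∀ {u v}, o u v → ¬ ∃ y, o y u := fun {u v} huv ⟨y, hyu⟩ =>
    h3 {y, u, v} (is3Clique_triple_iff.mpr
      ⟨hor.adj hyu, hor.adj (htrans hyu huv), hor.adj huv⟩)
  have hne : ∀ {u v}, o u v → (∃ y, o y u) ≠ (∃ y, o y v) := fun huv h =>
    hsink huv (h ▸ ⟨_, huv⟩)
  let C : G.Coloring Prop := Coloring.mk (fun v => ∃ y, o y v) fun huv =>
    (hor.total huv).elim hne fun h => (hne h).symm
  simpa using C.colorable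

lemma SemiTransitive.isComparabilityGraph_induce_neighborSet {V : Type*} {G : SimpleGraph V}
    {o : V → V → Prop} (hor : IsOrientation G o) (hst : SemiTransitive o) (v : V) :
    IsComparabilityGraph (G.induce (G.neighborSet v)) := by
  classical
  have side : ∀ x : G.neighborSet v, o v x ∧ ¬ o x v ∨ o x v ∧ ¬ o v x := fun x =>
    (hor.total x.2).imp (fun h => ⟨h, hor.asymm h⟩) fun h => ⟨h, hor.asymm h⟩
  refine ⟨fun x y => if (o v x ↔ o v y) then o x y else o y x, ⟨fun x y h => ?_, fun x y h => ?_,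
    fun x y h => ?_⟩, fun x y z hxy hyz => ?_⟩
  · simp only [comap_adj, Function.Embedding.coe_subtype]
    dsimp only at h
    split_ifs at h
    · exact hor.adj h
    · exact (hor.adj h).symm
  · by_cases hc : o v x ↔ o v y
    · simpa [hc] using hor.total h
    · simpa [hc, Iff.comm] using (hor.total h).symm
  · by_cases hc : o v x ↔ o v y
    · simpa [hc, Iff.comm] using hor.asymm (by simpa [hc] using h)
    · simpa [hc, Iff.comm] using hor.asymm (by simpa [hc] using h)
  rcases side x with ⟨hx, hx'⟩ | ⟨hx, hx'⟩ <;> rcases side y with ⟨hy, hy'⟩ | ⟨hy, hy'⟩ <;>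
    rcases side z with ⟨hz, hz'⟩ | ⟨hz, hz'⟩ <;>
    simp only [hx, hx', hy, hy', hz, hz', iff_self, iff_true, iff_false, if_true, if_false,
      not_true] at hxy hyz ⊢
  · exact (hst.shortcut_three hx hxy hyz hz).2
  · exact (hst.shortcut_three hz hx hxy hyz).1
  · exact (hst.not_cycle_three hy hz hyz).elim
  · exact (hst.shortcut_three hyz hz hx hxy).2
  · exact (hst.not_cycle_three hx hy hxy).elim
  · exact (hst.not_cycle_three hx hy hxy).elim
  · exact (hst.not_cycle_three hy hz hyz).elim
  · exact (hst.shortcut_three hxy hyz hz hx).1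

open List

lemma isChain_ne_iff_cons_or_cons {α : Type*} {x y : α} (L : List α)
    (hL : ∀ a ∈ L, a = x ∨ a = y) (hxy : x ≠ y) :
    IsChain (· ≠ ·) L ↔ IsChain (· ≠ ·) (y :: L) ∨ IsChain (· ≠ ·) (x :: L) := by
  cases L with
  | nil => simp
  | cons a L =>
    rcases hL a mem_cons_self with rfl | rfl
    · simp [isChain_cons_cons, hxy.symm]
    · simp [isChain_cons_cons, hxy]

section Words
variable {V : Type*} [DecidableEq V]

-- `x` and `y` alternate in `w`, starting with `x` (if either occurs at all).
def Leads (w : List V) (x y : V) : Prop :=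
  ∀ n, (w.take n).count y ≤ (w.take n).count x ∧ (w.take n).count x ≤ (w.take n).count y + 1

variable {w t : List V} {x y z : V}

lemma leads_nil : Leads [] x y := by
  simp [Leads]

lemma leads_cons_iff : Leads (z :: t) x y ↔ ∀ n,
    (z :: t.take n).count y ≤ (z :: t.take n).count x ∧
      (z :: t.take n).count x ≤ (z :: t.take n).count y + 1 := by
  refine ⟨fun h n => h (n + 1), ?_⟩
  rintro h (_ | n)
  · simp
  · exact h n

lemma leads_cons_of_ne (hx : z ≠ x) (hy : z ≠ y) : Leads (z :: t) x y ↔ Leads t x y := by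
  rw [leads_cons_iff]
  simp only [count_cons_of_ne hx, count_cons_of_ne hy]
  rfl

lemma leads_cons_self (hxy : x ≠ y) : Leads (x :: t) x y ↔ Leads t y x := by
  rw [leads_cons_iff]
  simp only [count_cons_self, count_cons_of_ne hxy]
  exact forall_congr' fun n => by omega

lemma not_leads_cons (hxy : x ≠ y) : ¬ Leads (y :: t) x y := fun h => by
  simpa [count_cons_of_ne hxy.symm] using h 1

lemma Leads.notMem_of_leads (hxy : x ≠ y) (h : Leads w x y) (h' : Leads w y x) : x ∉ w := by
  induction w with
  | nil => simp
  | cons z t ih =>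
    rcases eq_or_ne z x with rfl | hzx
    · exact (not_leads_cons hxy.symm h').elim
    rcases eq_or_ne z y with rfl | hzy
    · exact (not_leads_cons hxy h).elim
    rw [leads_cons_of_ne hzx hzy] at h
    rw [leads_cons_of_ne hzy hzx] at h'
    simpa [Ne.symm hzx] using ih h h'

lemma Leads.exists_count_lt (h : Leads w x y) (hxy : x ≠ y) (hx : x ∈ w) :
    ∃ n, (w.take n).count y < (w.take n).count x := by
  by_contra! hle
  exact h.notMem_of_leads hxy (fun n => ⟨hle n, by have := (h n).1; omega⟩) hx

lemma isChain_cons_filter_iff_leads (p : V → Bool) (hp : ∀ z, p z ↔ z = x ∨ z = y)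
    (hxy : x ≠ y) : IsChain (· ≠ ·) (y :: w.filter p) ↔ Leads w x y := by
  induction w generalizing x y with
  | nil => simp [leads_nil]
  | cons z t ih =>
    rcases eq_or_ne z x with rfl | hzx
    · rw [filter_cons_of_pos (by simp [hp]), isChain_cons_cons, leads_cons_self hxy,
        ih (fun u => (hp u).trans or_comm) hxy.symm]
      exact and_iff_right hxy.symm
    rcases eq_or_ne z y with rfl | hzy
    · rw [filter_cons_of_pos (by simp [hp]), isChain_cons_cons]
      simpa using not_leads_cons hxy
    rw [filter_cons_of_neg (by simp [hp, hzx, hzy]), leads_cons_of_ne hzx hzy, ih hp hxy]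

lemma alternate_iff_leads (hxy : x ≠ y) : Alternate w x y ↔ Leads w x y ∨ Leads w y x := by
  let p : V → Bool := fun z => decide (z = x ∨ z = y)
  rw [← isChain_cons_filter_iff_leads p (by simp [p]) hxy,
    ← isChain_cons_filter_iff_leads p (by simp [p, or_comm]) hxy.symm]
  exact isChain_ne_iff_cons_or_cons _ (fun a ha => by simpa using (mem_filter.mp ha).2) hxy

end Words

theorem Represents.semiTransitive {V : Type*} [DecidableEq V] {G : SimpleGraph V} {w : List V}
    (hw : Represents w G) : ∃ o, IsOrientation G o ∧ SemiTransitive o := by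
  obtain ⟨hmem, halt⟩ := hw
  have adj_iff {x y} (hxy : x ≠ y) : G.Adj x y ↔ Leads w x y ∨ Leads w y x :=
    (halt x y hxy).symm.trans (alternate_iff_leads hxy)
  set o : V → V → Prop := fun x y => G.Adj x y ∧ Leads w x y
  have count_le_of_reflTransGen {a b} (h : Relation.ReflTransGen o a b) (n : ℕ) :
      (w.take n).count b ≤ (w.take n).count a := by
    induction h with
    | refl => rfl
    | tail _ hbc ih => exact ((hbc.2 n).1).trans ih
  have hacyclic : IsAcyclic o := by
    intro a ha
    obtain ⟨b, ⟨hab, hlead⟩, hba⟩ := Relation.TransGen.head'_iff.mp ha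
    obtain ⟨n, hn⟩ := hlead.exists_count_lt hab.ne (hmem a)
    exact (count_le_of_reflTransGen hba n).not_gt hn
  refine ⟨o, ⟨fun u v h => h.1, fun u v h => ?_, fun u v h h' => ?_⟩, hacyclic, ?_⟩
  · exact ((adj_iff h.ne).mp h).imp (⟨h, ·⟩) (⟨h.symm, ·⟩)
  · exact h.2.notMem_of_leads h.1.ne h'.2 (hmem u)
  intro t f hpath hshort i j hij
  have hanti (n : ℕ) : Antitone fun k => (w.take n).count (f k) :=
    Fin.antitone_iff_succ_le.mpr fun k => ((hpath k).2 n).1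
  have hne : f i ≠ f j := by
    intro heq
    let k : Fin t := ⟨i, by omega⟩
    obtain ⟨hadj, hk⟩ : o (f k.castSucc) (f k.succ) := hpath k
    obtain ⟨n, hn⟩ := hk.exists_count_lt hadj.ne (hmem _)
    have hkj : (w.take n).count (f j) ≤ (w.take n).count (f k.succ) :=
      hanti n (Fin.le_def.mpr (show (i : ℕ) + 1 ≤ j by omega))
    rw [show k.castSucc = i from rfl, heq] at hn
    omega
  have hlead : Leads w (f i) (f j) := fun n => by
    have hi0 : (w.take n).count (f i) ≤ (w.take n).count (f 0) := hanti n (Fin.zero_le i)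
    have hlj : (w.take n).count (f (Fin.last t)) ≤ (w.take n).count (f j) :=
      hanti n (Fin.le_last j)
    exact ⟨hanti n hij.le, by have := (hshort.2 n).2; omega⟩
  exact ⟨(adj_iff hne).mpr (Or.inl hlead), hlead⟩

def wheelGraph.rimEmbedding (n : ℕ) : cycleGraph n ↪g wheelGraph n :=
  ⟨Function.Embedding.some, Iff.rfl⟩

lemma wheelGraph_neighborSet_none (n : ℕ) :
    (wheelGraph n).neighborSet none = Set.range some := by
  ext (_ | i)
  · simp [wheelGraph]
  · simp [wheelGraph]

lemma cycleGraph_five_cliqueFree_three : (cycleGraph 5).CliqueFree 3 := by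
  intro s hs
  obtain ⟨a, b, c, hab, hac, hbc, -⟩ := is3Clique_iff.mp hs
  revert a b c
  decide

lemma not_isComparabilityGraph_cycleGraph_five : ¬ IsComparabilityGraph (cycleGraph 5) := by
  intro h
  have hle := (h.colorable_two cycleGraph_five_cliqueFree_three).chromaticNumber_le
  rw [chromaticNumber_cycleGraph_of_odd 5 (by norm_num) (by decide)] at hle
  norm_num at hle

theorem not_exists_semiTransitive_wheelGraph_five :
    ¬ ∃ o, IsOrientation (wheelGraph 5) o ∧ SemiTransitive o := by
  rintro ⟨o, hor, hst⟩
  have hhub := hst.isComparabilityGraph_induce_neighborSet hor none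
  rw [wheelGraph_neighborSet_none] at hhub
  exact not_isComparabilityGraph_cycleGraph_five
    (hhub.of_iso (wheelGraph.rimEmbedding 5).isoInduceRange.symm)

/-- the wheel `W₅` admits no semi-transitive orientation; hence `W₅` is
not word-representable. -/
theorem W5_not_semiTransitive_not_wordRepresentable :
    (¬ ∃ o : Option (Fin 5) → Option (Fin 5) → Prop,
        IsOrientation (wheelGraph 5) o ∧ SemiTransitive o) ∧
      ¬ ∃ w : List (Option (Fin 5)), Represents w (wheelGraph 5) :=
  ⟨not_exists_semiTransitive_wheelGraph_five,
    fun ⟨_, hw⟩ => not_exists_semiTransitive_wheelGraph_five hw.semiTransitive⟩
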